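/- arXiv:2402.03736 — 7 statements merged into one kernel-verified Lean document; each statement's English description precedes it below -/
import Mathlib

section
/- Let G = (V, E) be a finite undirected simple graph and let s ≥ 1 be an integer. If S ⊆ V induces an s-bundle in G, then every subset P ⊆ S also induces an s-bundle in G (the hereditary property of s-bundles). -/
open Finset

variable {V : Type*} [Fintype V] [DecidableEq V]

/-- `S` induces an `s`-bundle in `G`: for every `T ⊆ S` with `|T| < |S| - s`,
the subgraph of `G` induced on `S \ T` is connected. -/
def IsSBundle (G : SimpleGraph V) (s : ℕ) (S : Finset V) : Prop :=
  ∀ T ⊆ S, (T.card : ℤ) < (S.card : ℤ) - (s : ℤ) →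
    (G.induce (↑(S \ T) : Set V)).Connected

/-- Deleting `T` from `P ⊆ S` is deleting `(S \ P) ∪ T` from `S`, and this deleted set is larger
than `T` by exactly `|S| - |P|`, so the bound `|T| < |P| - s` turns into the one required in `S`. -/
theorem IsSBundle.subset {G : SimpleGraph V} {s : ℕ} {S P : Finset V} (hS : IsSBundle G s S)
    (hPS : P ⊆ S) : IsSBundle G s P := by
  intro T hTP hT
  have hdel : S \ (S \ P ∪ T) = P \ T := by
    rw [← sup_eq_union, ← sdiff_sdiff_left, Finset.sdiff_sdiff_eq_self hPS]
  have hcard : ((S \ P ∪ T).card : ℤ) < S.card - s := by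
    rw [card_union_of_disjoint (disjoint_sdiff.mono_left hTP).symm, card_sdiff_of_subset hPS]
    push_cast [card_le_card hPS]
    omega
  exact hdel ▸ hS (S \ P ∪ T) (union_subset sdiff_subset (hTP.trans hPS)) hcard

theorem sBundle_hereditary_general (G : SimpleGraph V) (s : ℕ)
    (S : Finset V) (hS : IsSBundle G s S) :
    ∀ P ⊆ S, IsSBundle G s P :=
  fun _ hPS => hS.subset hPS

/-- Hereditary property: every subset of an `s`-bundle is an `s`-bundle. -/
theorem sBundle_hereditary (G : SimpleGraph V) (s : ℕ) (hs : 1 ≤ s)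
    (S : Finset V) (hS : IsSBundle G s S) :
    ∀ P ⊆ S, IsSBundle G s P :=
  sBundle_hereditary_general G s S hS
end

section
/- Let G = (V, E) be a finite undirected simple graph and let s ≥ 1 be an integer. Let W_1, …, W_k be pairwise disjoint subsets of V, each of which induces an s-component of G (every connected component of G[W_i] has at most s vertices). Then every F ⊆ W_1 ∪ ⋯ ∪ W_k that induces an s-bundle in G satisfies |F| ≤ Σ_{i=1}^{k} min(|W_i|, s) (the partition-based upper bound PUB). -/
open Finset

variable {V : Type*} [Fintype V] [DecidableEq V]

/-- `W` induces an `s`-component of `G`: every connected component of the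
induced subgraph `G[W]` has at most `s` vertices. -/
def IsSComponent (G : SimpleGraph V) (s : ℕ) (W : Finset V) : Prop :=
  ∀ c : (G.induce (↑W : Set V)).ConnectedComponent, c.supp.ncard ≤ s

/-!
If `F` is an `s`-bundle and `|F ∩ W i| > s`, deleting the fewer than `|F| - s` vertices of
`F \ W i` leaves `G[F ∩ W i]` connected, so `F ∩ W i` lies inside a single component of
`G[W i]`, which has at most `s` vertices. Hence `|F ∩ W i| ≤ min |W i| s`, and summing over
`i` bounds `|F|`.
-/

section

variable {α : Type*} {G : SimpleGraph α} {s : ℕ}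

theorem SimpleGraph.Connected.ncard_le_ncard_supp_induce [Finite α] {A B : Set α}
    (hAB : A ⊆ B) (hA : (G.induce A).Connected) :
    ∃ c : (G.induce B).ConnectedComponent, A.ncard ≤ c.supp.ncard := by
  obtain ⟨v⟩ := hA.nonempty
  let f := G.induceHomOfLE hAB
  refine ⟨(G.induce B).connectedComponentMk (f v), ?_⟩
  have hrange : Set.range f ⊆ ((G.induce B).connectedComponentMk (f v)).supp := by
    rintro _ ⟨a, rfl⟩
    exact SimpleGraph.ConnectedComponent.sound ((hA.preconnected v a).map f.toHom).symm
  calc A.ncard = (Set.range f).ncard := by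
        rw [Set.ncard_range_of_injective f.injective, Nat.card_coe_set_eq]
    _ ≤ _ := Set.ncard_le_ncard hrange

theorem IsSComponent.card_le_of_induce_connected [Finite α] {W A : Finset α}
    (hW : IsSComponent G s W) (hAW : A ⊆ W) (hA : (G.induce (A : Set α)).Connected) :
    A.card ≤ s := by
  obtain ⟨c, hc⟩ := hA.ncard_le_ncard_supp_induce (coe_subset.mpr hAW)
  rw [Set.ncard_coe_finset] at hc
  exact hc.trans (hW c)

variable [DecidableEq α]

theorem IsSBundle.induce_inter_connected {F : Finset α}
    (hF : IsSBundle G s F) (W : Finset α) (hlt : s < (F ∩ W).card) :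
    (G.induce (↑(F ∩ W) : Set α)).Connected := by
  have hsplit := card_inter_add_card_sdiff F W
  rw [← sdiff_sdiff_self_left]
  exact hF (F \ W) sdiff_subset (by omega)

theorem IsSBundle.card_inter_le_min [Finite α] {F W : Finset α}
    (hF : IsSBundle G s F) (hW : IsSComponent G s W) :
    (F ∩ W).card ≤ min W.card s := by
  refine le_min (card_le_card inter_subset_right) ?_
  by_contra! hlt
  exact hlt.not_ge
    (hW.card_le_of_induce_connected inter_subset_right (hF.induce_inter_connected W hlt))

end

theorem partition_upper_bound_general (G : SimpleGraph V) (s k : ℕ)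
    (W : Fin k → Finset V)
    (hcomp : ∀ i, IsSComponent G s (W i))
    (F : Finset V) (hFW : F ⊆ Finset.univ.biUnion W)
    (hF : IsSBundle G s F) :
    F.card ≤ ∑ i, min (W i).card s :=
  calc F.card = (univ.biUnion fun i => F ∩ W i).card := by
        rw [← inter_biUnion, inter_eq_left.mpr hFW]
    _ ≤ ∑ i, (F ∩ W i).card := card_biUnion_le
    _ ≤ ∑ i, min (W i).card s := sum_le_sum fun i _ => hF.card_inter_le_min (hcomp i)

/-- Partition-based upper bound (PUB): if `W 1, …, W k` are pairwise disjoint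
`s`-components, then any `s`-bundle inside their union has at most
`∑ i, min |W i| s` vertices. -/
theorem partition_upper_bound (G : SimpleGraph V) (s k : ℕ) (hs : 1 ≤ s)
    (W : Fin k → Finset V)
    (hdisj : ∀ i j, i ≠ j → Disjoint (W i) (W j))
    (hcomp : ∀ i, IsSComponent G s (W i))
    (F : Finset V) (hFW : F ⊆ Finset.univ.biUnion W)
    (hF : IsSBundle G s F) :
    F.card ≤ ∑ i, min (W i).card s :=
  partition_upper_bound_general G s k W hcomp F hFW hF
end

section
/- Let G = (V, E) be a finite undirected simple graph and let s ≥ 1 be an integer. Let I_1, …, I_k be pairwise disjoint subsets of V, each of which is an independent set of G. Then every F ⊆ I_1 ∪ ⋯ ∪ I_k that induces an s-bundle in G satisfies |F| ≤ Σ_{i=1}^{k} min(|I_i|, s) (the color-bound). -/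
open Finset

variable {V : Type*} [Fintype V] [DecidableEq V]

namespace SimpleGraph

variable {W : Type*} {G : SimpleGraph W} {A : Set W}

theorem IsIndepSet.induce_eq_bot (hA : G.IsIndepSet A) : G.induce A = ⊥ := by
  ext ⟨u, hu⟩ ⟨v, hv⟩
  simpa using fun huv ↦ hA hu hv (G.ne_of_adj huv) huv

theorem IsIndepSet.subsingleton_of_preconnected_induce (hA : G.IsIndepSet A)
    (hconn : (G.induce A).Preconnected) : A.Subsingleton := by
  rw [hA.induce_eq_bot, preconnected_bot_iff_subsingleton] at hconn
  exact (Set.subsingleton_coe A).mp hconn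

end SimpleGraph

/-- If `|F ∩ A| > s`, the bundle property allows deleting all of `F \ A`; what remains is the
edgeless graph on `F ∩ A`, which is connected only when it has at most one vertex. -/
theorem IsSBundle.card_inter_le_of_isIndepSet {α : Type*} [DecidableEq α] {G : SimpleGraph α}
    {s : ℕ} {F A : Finset α}
    (hF : IsSBundle G s F) (hs : 1 ≤ s) (hA : G.IsIndepSet (A : Set α)) :
    (F ∩ A).card ≤ s := by
  by_contra! hlt
  have hsplit := card_sdiff_add_card_inter F A
  have hconn := hF (F \ A) sdiff_subset (by omega)
  rw [sdiff_sdiff_self_left] at hconn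
  have hsub : (↑(F ∩ A) : Set α).Subsingleton :=
    SimpleGraph.IsIndepSet.subsingleton_of_preconnected_induce
      (hA.mono (coe_subset.mpr inter_subset_right)) hconn.preconnected
  have := card_le_one_iff_subsingleton.mpr hsub
  omega

theorem color_upper_bound_general (G : SimpleGraph V) (s k : ℕ) (hs : 1 ≤ s)
    (I : Fin k → Finset V)
    (hind : ∀ i, ∀ u ∈ I i, ∀ v ∈ I i, u ≠ v → ¬ G.Adj u v)
    (F : Finset V) (hFI : F ⊆ Finset.univ.biUnion I)
    (hF : IsSBundle G s F) :
    F.card ≤ ∑ i, min (I i).card s := by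
  have hF_eq : F = univ.biUnion fun i ↦ F ∩ I i := by
    rw [← inter_biUnion, inter_eq_left.mpr hFI]
  calc F.card ≤ ∑ i, (F ∩ I i).card := by
        conv_lhs => rw [hF_eq]
        exact card_biUnion_le
    _ ≤ ∑ i, min (I i).card s := sum_le_sum fun i _ ↦
        le_min (card_le_card inter_subset_right)
          (hF.card_inter_le_of_isIndepSet hs fun u hu v hv ↦ hind i u hu v hv)

/-- Color-bound: if `I 1, …, I k` are pairwise disjoint independent sets,
then any `s`-bundle inside their union has at most `∑ i, min |I i| s` vertices. -/
theorem color_upper_bound (G : SimpleGraph V) (s k : ℕ) (hs : 1 ≤ s)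
    (I : Fin k → Finset V)
    (hdisj : ∀ i j, i ≠ j → Disjoint (I i) (I j))
    (hind : ∀ i, ∀ u ∈ I i, ∀ v ∈ I i, u ≠ v → ¬ G.Adj u v)
    (F : Finset V) (hFI : F ⊆ Finset.univ.biUnion I)
    (hF : IsSBundle G s F) :
    F.card ≤ ∑ i, min (I i).card s :=
  color_upper_bound_general G s k hs I hind F hFI hF
end

section
/- Let G = (V, E) be a finite undirected simple graph and let s ≥ 1 be an integer. If F ⊆ V induces an s-bundle in G and u, v ∈ F with u ≠ v, then |F| ≤ |N_G(u) ∩ N_G(v)| + 2s (justifying the reduction rule that removes any edge (u, v) with |N_G(u) ∩ N_G(v)| ≤ LB − 2s when LB is the size of a known s-bundle). -/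
open Finset

variable {V : Type*} [Fintype V] [DecidableEq V]

lemma aux_deg (G : SimpleGraph V) [DecidableRel G.Adj] (s : ℕ) (hs : 1 ≤ s) (F : Finset V)
    (hF : IsSBundle G s F) (u : V) (hu : u ∈ F) :
    F.card ≤ (G.neighborFinset u ∩ F).card + s := by
  by_contra h
  push_neg at h
  set T := G.neighborFinset u ∩ F with hT
  have hTF : T ⊆ F := inter_subset_right
  have hTle : T.card ≤ F.card := card_le_card hTF
  have hconn := hF T hTF (by push_cast; omega)
  have huT : u ∉ T := by simp [hT]
  have huFT : u ∈ F \ T := mem_sdiff.2 ⟨hu, huT⟩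
  have hcard : (F \ T).card = F.card - T.card := card_sdiff_of_subset hTF
  have h2 : 1 < (F \ T).card := by omega
  obtain ⟨w, hwFT, hwu⟩ := exists_mem_ne h2 u
  have huS : u ∈ (↑(F \ T) : Set V) := by simpa using huFT
  have hwS : w ∈ (↑(F \ T) : Set V) := by simpa using hwFT
  obtain ⟨p⟩ := hconn.preconnected ⟨u, huS⟩ ⟨w, hwS⟩
  have hne : (⟨u, huS⟩ : (↑(F \ T) : Set V)) ≠ ⟨w, hwS⟩ := by
    simp [Subtype.ext_iff]; exact fun h' => hwu h'.symm
  have hnil : ¬ p.Nil := SimpleGraph.Walk.not_nil_of_ne hne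
  have hadj := p.adj_snd hnil
  set x := p.getVert 1 with hx
  have hadj' : G.Adj u ↑x := hadj
  have hxT : (↑x : V) ∈ T := by
    have hxF : (↑x : V) ∈ F \ T := by
      have := x.2
      simpa using this
    exact mem_inter.2 ⟨by simpa using hadj', (mem_sdiff.1 hxF).1⟩
  have hxF : (↑x : V) ∈ F \ T := by
    have := x.2
    simpa using this
  exact (mem_sdiff.1 hxF).2 hxT

/-- Any `s`-bundle containing two distinct vertices `u, v` has at most
`|N_G(u) ∩ N_G(v)| + 2s` vertices. -/
theorem sBundle_card_le_commonNeighbors_add (G : SimpleGraph V) [DecidableRel G.Adj]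
    (s : ℕ) (hs : 1 ≤ s) (F : Finset V) (hF : IsSBundle G s F)
    (u v : V) (hu : u ∈ F) (hv : v ∈ F) (huv : u ≠ v) :
    F.card ≤ (G.neighborFinset u ∩ G.neighborFinset v).card + 2 * s := by
  have hA := aux_deg G s hs F hF u hu
  have hB := aux_deg G s hs F hF v hv
  set A := G.neighborFinset u ∩ F
  set B := G.neighborFinset v ∩ F
  have hunion : (A ∪ B).card ≤ F.card :=
    card_le_card (union_subset inter_subset_right inter_subset_right)
  have hkey : (A ∪ B).card + (A ∩ B).card = A.card + B.card :=
    card_union_add_card_inter A B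
  have hsub : A ∩ B ⊆ G.neighborFinset u ∩ G.neighborFinset v := by
    intro x hx
    simp only [A, B, mem_inter] at hx ⊢
    exact ⟨hx.1.1, hx.2.1⟩
  have hle : (A ∩ B).card ≤ (G.neighborFinset u ∩ G.neighborFinset v).card :=
    card_le_card hsub
  omega
end

section
/- Let G = (V, E) be a finite undirected simple graph and let s ≥ 1 be an integer. If F ⊆ V induces an s-bundle in G and v ∈ F, then the set F ∩ N_G(v) also induces an s-bundle in G and |F ∩ N_G(v)| ≥ |F| − s (as integers). Consequently, if every subset of N_G(v) inducing an s-bundle has size at most B, then every s-bundle containing v has size at most B + s (justifying the PUB-based vertex-reduction rule). -/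
open Finset

variable {V : Type*} [Fintype V] [DecidableEq V]

/-! Any subset of an `s`-bundle is again an `s`-bundle: deleting `T` from `N ⊆ F` is the same as
deleting the larger set `(F \ N) ∪ T` from `F`, and the bound `|T| < |N| - s` is exactly what makes
that deletion admissible. For the size bound, delete `F ∩ N(v)` from `F`: if fewer than `|F| - s`
vertices were deleted, the rest would be connected, but `v` has no neighbour in it, so it would be
`{v}` alone, contradicting that it has more than `s ≥ 1` vertices. -/

theorem SimpleGraph.Preconnected.card_le_one_of_forall_not_adj {W : Type*} {G : SimpleGraph W}
    {U : Finset W} (hU : (G.induce (U : Set W)).Preconnected) {v : W} (hv : v ∈ U)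
    (hnadj : ∀ w ∈ U, ¬G.Adj v w) : U.card ≤ 1 := by
  by_contra! hU1
  have : Nontrivial (U : Set W) := (Finset.one_lt_card_iff_nontrivial.mp hU1).coe_sort
  obtain ⟨w, hvw⟩ := hU.exists_adj_of_nontrivial ⟨v, hv⟩
  exact hnadj w (Finset.mem_coe.mp w.2) hvw

namespace IsSBundle

variable {α : Type*} [DecidableEq α] {G : SimpleGraph α} {s : ℕ} {S : Finset α}

theorem subset_s8 (hS : IsSBundle G s S) {N : Finset α} (hN : N ⊆ S) : IsSBundle G s N := by
  intro T hT hTcard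
  have hNT : N \ T ⊆ S := sdiff_subset.trans hN
  have hsmall : ((S \ (N \ T)).card : ℤ) < S.card - s := by
    have := card_sdiff_of_subset hNT
    have := card_sdiff_of_subset hT
    have := card_le_card hNT
    have := card_le_card hT
    omega
  have hconn := hS _ sdiff_subset hsmall
  rwa [Finset.sdiff_sdiff_eq_self hNT] at hconn

theorem card_sub_le_card_inter_neighborFinset [Fintype α] [DecidableRel G.Adj]
    (hS : IsSBundle G s S) (hs : 1 ≤ s) {v : α} (hv : v ∈ S) :
    (S.card : ℤ) - s ≤ (S ∩ G.neighborFinset v).card := by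
  by_contra! hsmall
  have hsub : S ∩ G.neighborFinset v ⊆ S := inter_subset_left
  have hconn := hS _ hsub hsmall
  rw [sdiff_inter_self_left] at hconn
  have hrest := hconn.preconnected.card_le_one_of_forall_not_adj (v := v)
    (by simp [hv]) (fun w hw ↦ by simpa using (mem_sdiff.mp hw).2)
  have := card_sdiff_add_card_inter S (G.neighborFinset v)
  omega

end IsSBundle

/-- PUB-based vertex reduction rule: for an `s`-bundle `F` containing `v`,
`F ∩ N_G(v)` is an `s`-bundle with at least `|F| - s` vertices; hence if every
`s`-bundle inside `N_G(v)` has at most `B` vertices, then `|F| ≤ B + s`. -/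
theorem sBundle_inter_neighbors (G : SimpleGraph V) [DecidableRel G.Adj]
    (s : ℕ) (hs : 1 ≤ s) (F : Finset V) (hF : IsSBundle G s F)
    (v : V) (hv : v ∈ F) (B : ℕ)
    (hB : ∀ P ⊆ G.neighborFinset v, IsSBundle G s P → P.card ≤ B) :
    IsSBundle G s (F ∩ G.neighborFinset v) ∧
    ((F ∩ G.neighborFinset v).card : ℤ) ≥ (F.card : ℤ) - (s : ℤ) ∧
    F.card ≤ B + s := by
  have hbundle := hF.subset_s8 (inter_subset_left (s₂ := G.neighborFinset v))
  have hcard := hF.card_sub_le_card_inter_neighborFinset hs hv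
  have hB' := hB _ inter_subset_right hbundle
  exact ⟨hbundle, hcard, by omega⟩
end

section
/- Let G = (V, E) be a finite undirected simple graph and let s ≥ 1 be an integer. Let S ⊆ V, let v ∈ S satisfy |N_G(v) ∩ S| ≤ |S| − s (as integers), and let u ∈ V \ S be a vertex that is not adjacent to v in G. Then S ∪ {u} does not induce an s-bundle in G (justifying the candidate-reduction rule that removes non-neighbors of saturated vertices). -/
/-! Deleting the neighbours of `v` in `S` removes at most `|S| - s < |S ∪ {u}| - s` vertices
and leaves `v` without any neighbour, while `u` survives; so the rest is disconnected. -/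

open Finset

variable {V : Type*} [Fintype V] [DecidableEq V]

lemma SimpleGraph.Preconnected.exists_adj_mem_of_induce {W : Type*} {G : SimpleGraph W}
    {A : Set W} (h : (G.induce A).Preconnected) {v u : W} (hv : v ∈ A) (hu : u ∈ A)
    (hne : v ≠ u) : ∃ w ∈ A, G.Adj v w := by
  have : Nontrivial A := ⟨⟨v, hv⟩, ⟨u, hu⟩, by simpa using hne⟩
  obtain ⟨w, hvw⟩ := h.exists_adj_of_nontrivial ⟨v, hv⟩
  exact ⟨w, w.2, hvw⟩

theorem saturated_vertex_rule_general (G : SimpleGraph V) [DecidableRel G.Adj]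
    (s : ℕ) (S : Finset V) (v : V) (hv : v ∈ S)
    (hdeg : ((G.neighborFinset v ∩ S).card : ℤ) ≤ (S.card : ℤ) - (s : ℤ))
    (u : V) (hu : u ∉ S) (hadj : ¬ G.Adj u v) :
    ¬ IsSBundle G s (insert u S) := by
  intro hbundle
  set T := G.neighborFinset v ∩ S
  have hTsub : T ⊆ insert u S := inter_subset_right.trans (subset_insert u S)
  have hTcard : (T.card : ℤ) < ((insert u S).card : ℤ) - s := by
    rw [card_insert_of_notMem hu]
    push_cast
    omega
  have hv' : v ∈ insert u S \ T := by simp [T, hv]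
  have hu' : u ∈ insert u S \ T := by simp [T, hu]
  obtain ⟨w, hw, hvw⟩ := (hbundle T hTsub hTcard).preconnected.exists_adj_mem_of_induce
    (mem_coe.2 hv') (mem_coe.2 hu') (ne_of_mem_of_not_mem hv hu)
  obtain ⟨hwuS, hwT⟩ := mem_sdiff.1 (mem_coe.1 hw)
  obtain rfl | hwS := mem_insert.1 hwuS
  · exact hadj hvw.symm
  · exact hwT (mem_inter.2 ⟨(G.mem_neighborFinset v w).2 hvw, hwS⟩)

/-- Saturated-vertex rule: if `v ∈ S` has at most `|S| - s` neighbors in `S`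
and `u ∉ S` is not adjacent to `v`, then `S ∪ {u}` is not an `s`-bundle. -/
theorem saturated_vertex_rule (G : SimpleGraph V) [DecidableRel G.Adj]
    (s : ℕ) (hs : 1 ≤ s) (S : Finset V) (v : V) (hv : v ∈ S)
    (hdeg : ((G.neighborFinset v ∩ S).card : ℤ) ≤ (S.card : ℤ) - (s : ℤ))
    (u : V) (hu : u ∉ S) (hadj : ¬ G.Adj u v) :
    ¬ IsSBundle G s (insert u S) :=
  saturated_vertex_rule_general G s S v hv hdeg u hu hadj
end

section
/- Let G = (V, E) be a finite undirected simple graph and let s ≥ 1 be an integer. Suppose F ⊆ V induces an s-bundle in G, S ⊆ F, and u ∈ S. Then the number of vertices of F outside S that are not adjacent to u satisfies |(F \ S) \ N_G(u)| ≤ s − 1 − |S \ N_G[u]| (as integers); that is, at most s − 1 − |S \ N_G[u]| further non-neighbors of u can be added to the partial solution S (justifying the multi-branching rule with t = s − 1 − |S \ N_G[u]| branches on the non-neighbors of u). -/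
/-!
If `|F \ N(u)| > s`, delete `T = F ∩ N(u)`: then `|T| < |F| - s`, yet `u` is isolated in the
graph induced on `F \ T = F \ N(u)`, which has a second vertex, so it is disconnected. Hence
`|F \ N(u)| ≤ s`, and `F \ N(u)` splits into `u`, the non-neighbours of `u` in `S \ {u}` and
those in `F \ S`.
-/

open Finset

variable {V : Type*} [Fintype V] [DecidableEq V]

namespace SimpleGraph

theorem Preconnected.exists_adj_of_induce {W : Type*} {G : SimpleGraph W} {s : Set W}
    (h : (G.induce s).Preconnected) {u v : W} (hu : u ∈ s) (hv : v ∈ s) (huv : u ≠ v) : ∃ w ∈ s, G.Adj u w := by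
  have : Nontrivial s := ⟨⟨⟨u, hu⟩, ⟨v, hv⟩, by simpa using huv⟩⟩
  obtain ⟨w, hw⟩ := h.exists_adj_of_nontrivial ⟨u, hu⟩
  exact ⟨w, w.2, hw⟩

end SimpleGraph

theorem IsSBundle.card_sdiff_neighborFinset_le {G : SimpleGraph V} [DecidableRel G.Adj]
    {s : ℕ} {F : Finset V} (hF : IsSBundle G s F) (hs : 1 ≤ s) {u : V} (hu : u ∈ F) :
    #(F \ G.neighborFinset u) ≤ s := by
  by_contra! hlt
  have hsplit := card_sdiff_add_card_inter F (G.neighborFinset u)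
  have hconn := hF (F ∩ G.neighborFinset u) inter_subset_left (by omega)
  rw [sdiff_inter_self_left, coe_sdiff] at hconn
  have huN : u ∈ F \ G.neighborFinset u := by simp [hu]
  obtain ⟨v, hv, hvu⟩ := exists_mem_ne (show 1 < #(F \ G.neighborFinset u) by omega) u
  obtain ⟨w, hw, huw⟩ :=
    hconn.preconnected.exists_adj_of_induce (by simpa using huN) (by simpa using hv) hvu.symm
  exact hw.2 (by simpa using huw)

/-- Multi-branching rule: for an `s`-bundle `F`, a partial solution `S ⊆ F`
and `u ∈ S`, at most `s - 1 - |S \ N_G[u]|` vertices of `F \ S` are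
non-neighbors of `u`. -/
theorem multi_branching_bound (G : SimpleGraph V) [DecidableRel G.Adj]
    (s : ℕ) (hs : 1 ≤ s) (F : Finset V) (hF : IsSBundle G s F)
    (S : Finset V) (hSF : S ⊆ F) (u : V) (hu : u ∈ S) :
    (((F \ S) \ G.neighborFinset u).card : ℤ) ≤
      (s : ℤ) - 1 - ((S \ insert u (G.neighborFinset u)).card : ℤ) := by
  have hbound := hF.card_sdiff_neighborFinset_le hs (hSF hu)
  have hsplit : #((F \ S) \ G.neighborFinset u) + #(S \ G.neighborFinset u) =
      #(F \ G.neighborFinset u) := by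
    rw [← card_sdiff_add_card_inter (F \ G.neighborFinset u) S, sdiff_right_comm,
      sdiff_inter_right_comm, inter_eq_right.mpr hSF]
  have huN : u ∈ S \ G.neighborFinset u := by simp [hu]
  have herase : #(S \ insert u (G.neighborFinset u)) + 1 = #(S \ G.neighborFinset u) := by
    rw [sdiff_insert, card_erase_add_one huN]
  omega
end
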